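/- arXiv:2005.04152 — 3 statements merged into one kernel-verified Lean document; each statement's English description precedes it below -/
import Mathlib

section
/- For every integer N ≥ 1, every ℏ > 0, every Schwartz function a ∈ 𝒮(ℝ) and every z ∈ ℂ, the polynomial ψ^a_z satisfies ψ^a_z = Σ_{n=0}^{N−1} ã((τ(z)−nℏ)/ℏ) · conj(φ_n(z)) · φ_n; equivalently, for every w ∈ ℂ: ∫_ℝ a(t)·e^{iτ(z)t/ℏ}·N·(1+conj(e^{it}z)·w)^(N−1) dt/√(2π) = Σ_{n=0}^{N−1} ã(τ(z)/ℏ − n)·conj(φ_n(z))·φ_n(w). -/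
/-! Expanding the coherent state binomially gives the reproducing-kernel identity
`ρ_{z₀}(w) = Σₙ conj(φₙ(z₀))·φₙ(w)`. Rotating `z₀ = e^{it}z` only multiplies the `n`-th term
by `e^{-int}`, so integrating against `a(t)·e^{iτ(z)t/ℏ}` turns the `n`-th coefficient into the
Fourier transform of `a` at the shifted frequency `τ(z)/ℏ − n`. -/

open MeasureTheory Complex Real

noncomputable section

/-- The basis vectors `φ_n(z) = √(N!/(n!(N−1−n)!))·zⁿ`. -/
def phiN (N n : ℕ) : ℂ → ℂ :=
  fun z => (Real.sqrt ((N.factorial : ℝ) / (n.factorial * (N - 1 - n).factorial)) : ℂ) * z ^ n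

/-- The coherent state `ρ_{z₀}(z) = N·(1+conj(z₀)·z)^{N−1}`. -/
def rhoN (N : ℕ) (z₀ : ℂ) : ℂ → ℂ :=
  fun z => (N : ℂ) * (1 + (starRingEnd ℂ) z₀ * z) ^ (N - 1)

/-- The Fourier transform `ã(y) = (2π)^{-1/2} ∫ e^{ixy} a(x) dx`. -/
def tildeF (a : ℝ → ℂ) (y : ℝ) : ℂ :=
  (Real.sqrt (2 * Real.pi))⁻¹ * ∫ x : ℝ, Complex.exp (Complex.I * x * y) * a x

/-- `τ(z) = |z|²/(1+|z|²)`. -/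
def tauS (z : ℂ) : ℝ := ‖z‖ ^ 2 / (1 + ‖z‖ ^ 2)

/-- The building vector `ψ^a_z = ∫ a(t)·e^{iτ(z)t/ℏ}·ρ_{e^{it}z} dt/√(2π)`. -/
def psiA (N : ℕ) (ℏ : ℝ) (a : ℝ → ℂ) (z : ℂ) : ℂ → ℂ :=
  fun w => ∫ t : ℝ, a t * Complex.exp (Complex.I * (tauS z) * t / (ℏ : ℂ)) *
    rhoN N (Complex.exp (Complex.I * t) * z) w / (Real.sqrt (2 * Real.pi) : ℂ)

lemma phiN_mul (N n : ℕ) (c z : ℂ) : phiN N n (c * z) = c ^ n * phiN N n z := by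
  simp only [phiN, mul_pow]
  ring

lemma conj_phiN_mul_phiN {N n : ℕ} (hn : n < N) (z w : ℂ) :
    starRingEnd ℂ (phiN N n z) * phiN N n w
      = N * (N - 1).choose n * (starRingEnd ℂ z * w) ^ n := by
  set r := Real.sqrt ((N.factorial : ℝ) / (n.factorial * (N - 1 - n).factorial)) with hr_def
  have hr : r * r = N * (N - 1).choose n := by
    rw [hr_def, Real.mul_self_sqrt (by positivity), div_eq_iff (by positivity),
      ← Nat.mul_factorial_pred (by omega : N ≠ 0),
      ← Nat.choose_mul_factorial_mul_factorial (by omega : n ≤ N - 1)]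
    push_cast
    ring
  replace hr : (r : ℂ) * r = N * (N - 1).choose n := by exact_mod_cast hr
  simp only [phiN, map_mul, map_pow, Complex.conj_ofReal, ← hr_def]
  linear_combination (starRingEnd ℂ z * w) ^ n * hr

lemma rhoN_eq_sum_conj_phiN_mul_phiN (N : ℕ) (z₀ w : ℂ) :
    rhoN N z₀ w = ∑ n ∈ Finset.range N, starRingEnd ℂ (phiN N n z₀) * phiN N n w := by
  rcases N.eq_zero_or_pos with rfl | hN
  · simp [rhoN]
  rw [rhoN, add_comm, add_pow, Nat.sub_add_cancel hN, Finset.mul_sum]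
  refine Finset.sum_congr rfl fun n hn => ?_
  rw [conj_phiN_mul_phiN (Finset.mem_range.mp hn)]
  ring

lemma cexp_mul_conj_cexp_pow (x t : ℝ) (n : ℕ) :
    cexp (I * x * t) * starRingEnd ℂ (cexp (I * t)) ^ n = cexp (I * t * ((x - n : ℝ) : ℂ)) := by
  rw [← Complex.exp_conj, ← Complex.exp_nat_mul, ← Complex.exp_add]
  congr 1
  simp only [map_mul, Complex.conj_I, Complex.conj_ofReal]
  push_cast
  ring

lemma integrable_cexp_I_mul {f : ℝ → ℂ} (hf : Integrable f) (y : ℝ) :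
    Integrable fun t : ℝ => cexp (I * t * y) * f t :=
  hf.bdd_mul (c := 1) (by fun_prop) <| Filter.Eventually.of_forall fun t => by
    simp [Complex.norm_exp]

theorem stmt4_general (N : ℕ) (ℏ : ℝ) (a : SchwartzMap ℝ ℂ) (z w : ℂ) :
    psiA N ℏ (⇑a) z w
      = ∑ n ∈ Finset.range N,
          tildeF (⇑a) (tauS z / ℏ - (n : ℝ)) * (starRingEnd ℂ) (phiN N n z) * phiN N n w := by
  set s : ℂ := (Real.sqrt (2 * Real.pi) : ℂ)
  have integrand : ∀ t : ℝ,
      a t * cexp (I * tauS z * t / ℏ) * rhoN N (cexp (I * t) * z) w / s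
        = ∑ n ∈ Finset.range N, cexp (I * t * ((tauS z / ℏ - n : ℝ) : ℂ)) * a t / s *
            (starRingEnd ℂ (phiN N n z) * phiN N n w) := by
    intro t
    rw [rhoN_eq_sum_conj_phiN_mul_phiN, Finset.mul_sum, Finset.sum_div]
    refine Finset.sum_congr rfl fun n _ => ?_
    rw [← cexp_mul_conj_cexp_pow, phiN_mul, map_mul, map_pow]
    push_cast
    ring_nf
  rw [psiA, integral_congr_ae (Filter.Eventually.of_forall integrand),
    integral_finsetSum _ fun n _ =>
      ((integrable_cexp_I_mul a.integrable _).div_const s).mul_const _]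
  refine Finset.sum_congr rfl fun n _ => ?_
  rw [integral_mul_const, integral_div, tildeF, div_eq_inv_mul, Complex.ofReal_inv]
  ring

/-- `ψ^a_z = Σ_{n=0}^{N−1} ã(τ(z)/ℏ − n)·conj(φ_n(z))·φ_n`. -/
theorem stmt4 (N : ℕ) (hN : 1 ≤ N) (ℏ : ℝ) (hℏ : 0 < ℏ) (a : SchwartzMap ℝ ℂ) (z w : ℂ) :
    psiA N ℏ (⇑a) z w
      = ∑ n ∈ Finset.range N,
          tildeF (⇑a) (tauS z / ℏ - (n : ℝ)) * (starRingEnd ℂ) (phiN N n z) * phiN N n w :=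
  stmt4_general N ℏ a z w
end
end

section
/- For every f ∈ H_N one has the resolution of the identity ∫_ℂ ⟨f, ψ^a_z⟩_a · ψ^a_z dμ_N(z) = f, where ⟨f, g⟩_a := Σ_{n=0}^{N−1} (C^N_n)^(−1)·⟨f, φ_n⟩·⟨φ_n, g⟩ is the renormalized inner product on H_N (for which the vectors ψ^N_n = √(C^N_n)·φ_n are orthonormal). -/
open MeasureTheory Complex Real

noncomputable section

/-- The measure `dμ_N(z) = (1/π)·(1+|z|²)^{-(N+1)} dA(z)` on `ℂ`. -/
def muN (N : ℕ) : Measure ℂ :=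
  volume.withDensity (fun z => ENNReal.ofReal (1 / (Real.pi * (1 + ‖z‖ ^ 2) ^ (N + 1))))

/-- The inner product `⟨P,Q⟩ = ∫ P(z) conj(Q(z)) dμ_N(z)`, linear in the first argument. -/
def hermN (N : ℕ) (P Q : ℂ → ℂ) : ℂ :=
  ∫ z, P z * (starRingEnd ℂ) (Q z) ∂(muN N)

/-- `C^N_n = N·binom(N−1,n)·∫₀¹ |ã((τ−nℏ)/ℏ)|²·(τ/(1−τ))ⁿ·(1−τ)^{N−1} dτ`. -/
def CNn (N : ℕ) (ℏ : ℝ) (a : ℝ → ℂ) (n : ℕ) : ℝ :=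
  N * ((N - 1).choose n) *
    ∫ τ in (0:ℝ)..1, ‖tildeF a ((τ - n * ℏ) / ℏ)‖ ^ 2 * (τ / (1 - τ)) ^ n * (1 - τ) ^ (N - 1)

/-- The renormalized inner product `⟨f,g⟩_a = Σ_n (C^N_n)⁻¹·⟨f,φ_n⟩·⟨φ_n,g⟩`. -/
def hermA (N : ℕ) (ℏ : ℝ) (a : ℝ → ℂ) (f g : ℂ → ℂ) : ℂ :=
  ∑ n ∈ Finset.range N,
    (((CNn N ℏ a n : ℝ) : ℂ))⁻¹ * hermN N f (phiN N n) * hermN N (phiN N n) g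

open Finset Nat ComplexConjugate

/-!
The measure `μ_N` is rotation invariant, so in polar coordinates, after the substitution
`τ = r² / (1 + r²)`, one gets `∫ zⁿ z̄ᵐ g(τ(z)) dμ_N = δₙₘ ∫₀¹ τⁿ (1 - τ)^(N-1-n) g(τ) dτ`.
Expanding `ρ` binomially, `ψ^a_z(w) = ∑ₘ N binom(N-1, m) ã((τ(z) - mℏ)/ℏ) z̄ᵐ wᵐ`; hence
`⟨φₙ, ψ^a_z⟩` is a multiple of `zⁿ conj ã((τ(z) - nℏ)/ℏ)`, and orthogonality of the monomials gives
`∫ ⟨φₙ, ψ^a_z⟩ ψ^a_z dμ_N(z) = C^N_n φₙ`. Dividing by `C^N_n` and summing over `n` leaves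
`∑ₙ ⟨f, φₙ⟩ φₙ = f`.
-/

lemma integral_muN {E : Type*} [NormedAddCommGroup E] [NormedSpace ℝ E] (N : ℕ) (F : ℂ → E) :
    ∫ z, F z ∂muN N = ∫ z, (1 / (π * (1 + ‖z‖ ^ 2) ^ (N + 1))) • F z := by
  rw [muN, integral_withDensity_eq_integral_toReal_smul (by fun_prop) (by simp)]
  congr with z
  rw [ENNReal.toReal_ofReal (by positivity)]

lemma integrable_muN_of_norm_le {N k : ℕ} (hk : k < N) {F : ℂ → ℂ}
    (hF : AEStronglyMeasurable F volume) {C : ℝ} (hFC : ∀ z, ‖F z‖ ≤ C * (1 + ‖z‖ ^ 2) ^ k) :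
    Integrable F (muN N) := by
  rw [muN, integrable_withDensity_iff_integrable_smul' (by fun_prop) (by simp)]
  have hdom : Integrable (fun z : ℂ => C / π * (1 + ‖z‖ ^ 2) ^ (-(4 : ℝ) / 2)) :=
    (integrable_rpow_neg_one_add_norm_sq (by simp; norm_num)).const_mul _
  refine hdom.mono' ((Measurable.ennreal_toReal (by fun_prop)).aestronglyMeasurable.smul hF)
    (ae_of_all _ fun z => ?_)
  have hC : 0 ≤ C := by simpa using (norm_nonneg _).trans (hFC 0)
  have hpow : (1 + ‖z‖ ^ 2) ^ (k + 2) ≤ (1 + ‖z‖ ^ 2) ^ (N + 1) :=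
    pow_le_pow_right₀ (by nlinarith [norm_nonneg z]) (by omega)
  rw [norm_smul, ENNReal.toReal_ofReal (by positivity), Real.norm_of_nonneg (by positivity),
    show -(4 : ℝ) / 2 = -(2 : ℕ) by norm_num, Real.rpow_neg (by positivity), Real.rpow_natCast]
  calc 1 / (π * (1 + ‖z‖ ^ 2) ^ (N + 1)) * ‖F z‖
      ≤ 1 / (π * (1 + ‖z‖ ^ 2) ^ (N + 1)) * (C * (1 + ‖z‖ ^ 2) ^ k) := by gcongr; exact hFC z
    _ = C / π * ((1 + ‖z‖ ^ 2) ^ k / (1 + ‖z‖ ^ 2) ^ (N + 1)) := by field_simp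
    _ ≤ C / π * ((1 + ‖z‖ ^ 2) ^ k / (1 + ‖z‖ ^ 2) ^ (k + 2)) := by gcongr
    _ = C / π * ((1 + ‖z‖ ^ 2) ^ 2)⁻¹ := by rw [pow_add]; field_simp

lemma pow_le_one_add_sq_pow {t : ℝ} (ht : 0 ≤ t) {k j : ℕ} (hk : k ≤ 2 * j) :
    t ^ k ≤ (1 + t ^ 2) ^ j := by
  rcases le_total t 1 with h | h
  · exact (pow_le_one₀ ht h).trans (one_le_pow₀ (by nlinarith))
  · calc t ^ k ≤ (t ^ 2) ^ j := by rw [← pow_mul]; exact pow_le_pow_right₀ h hk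
      _ ≤ (1 + t ^ 2) ^ j := by gcongr; linarith

@[fun_prop]
lemma continuous_tauS : Continuous tauS :=
  Continuous.div (by fun_prop) (by fun_prop) fun z => by positivity

lemma integrable_muN_monomial_mul_comp_tauS {N n m : ℕ} (hn : n < N) (hm : m < N)
    {g : ℝ → ℂ} (hg : Continuous g) {C : ℝ} (hgC : ∀ τ, ‖g τ‖ ≤ C) :
    Integrable (fun z => z ^ n * conj z ^ m * g (tauS z)) (muN N) := by
  refine integrable_muN_of_norm_le (k := N - 1) (C := C) (by omega)
    (by fun_prop : Continuous fun z => z ^ n * conj z ^ m * g (tauS z)).aestronglyMeasurable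
    fun z => ?_
  calc ‖z ^ n * conj z ^ m * g (tauS z)‖ = ‖z‖ ^ (n + m) * ‖g (tauS z)‖ := by
        simp [pow_add]
    _ ≤ (1 + ‖z‖ ^ 2) ^ (N - 1) * C :=
        mul_le_mul (pow_le_one_add_sq_pow (norm_nonneg z) (by omega)) (hgC _) (norm_nonneg _)
          (by positivity)
    _ = C * (1 + ‖z‖ ^ 2) ^ (N - 1) := mul_comm _ _

lemma integrable_muN_monomial {N n m : ℕ} (hn : n < N) (hm : m < N) :
    Integrable (fun z : ℂ => z ^ n * conj z ^ m) (muN N) := by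
  simpa using integrable_muN_monomial_mul_comp_tauS hn hm (g := fun _ => 1) continuous_const
    (C := 1) (by simp)

lemma integral_exp_int_mul_I (k : ℤ) :
    ∫ θ in Set.Ioo (-π) π, exp (k * (θ * I)) = if k = 0 then ((2 * π : ℝ) : ℂ) else 0 := by
  rw [← integral_Ioc_eq_integral_Ioo, ← intervalIntegral.integral_of_le (by linarith [pi_pos])]
  split_ifs with hk
  · simp only [hk, Int.cast_zero, zero_mul, Complex.exp_zero, intervalIntegral.integral_const,
      sub_neg_eq_add, real_smul, mul_one]
    push_cast
    ring
  have hc : (k : ℂ) * I ≠ 0 := mul_ne_zero (by exact_mod_cast hk) I_ne_zero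
  simp_rw [← mul_assoc, mul_right_comm _ _ I]
  rw [integral_exp_mul_complex hc, div_eq_zero_iff, sub_eq_zero]
  left
  rw [show (k : ℂ) * I * ((-π : ℝ) : ℂ) = k * I * π + ((-k : ℤ) : ℂ) * (2 * π * I) by
    push_cast; ring, Complex.exp_add, exp_int_mul_two_pi_mul_I, mul_one]

lemma integral_monomial_mul_radial (n m : ℕ) (h : ℝ → ℂ) :
    ∫ z : ℂ, z ^ n * conj z ^ m * h ‖z‖ =
      if n = m then ((2 * π : ℝ) : ℂ) * ∫ r in Set.Ioi (0 : ℝ), (r : ℂ) ^ (2 * n + 1) * h r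
      else 0 := by
  rw [← Complex.integral_comp_polarCoord_symm, polarCoord_target, Measure.volume_eq_prod]
  have hpolar : ∀ p ∈ Set.Ioi (0 : ℝ) ×ˢ Set.Ioo (-π) π,
      p.1 • (Complex.polarCoord.symm p ^ n * conj (Complex.polarCoord.symm p) ^ m *
        h ‖Complex.polarCoord.symm p‖) =
        ((p.1 : ℂ) ^ (n + m + 1) * h p.1) * exp (((n - m : ℤ) : ℂ) * (p.2 * I)) := by
    rintro ⟨r, θ⟩ ⟨hr, -⟩
    have hz : Complex.polarCoord.symm (r, θ) = r * exp (θ * I) := by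
      rw [Complex.polarCoord_symm_apply, exp_mul_I]; push_cast; ring
    have hconj : conj (exp (θ * I)) = exp (-(θ * I)) := by
      rw [← exp_conj]; simp
    rw [norm_polarCoord_symm, abs_of_pos hr, hz, map_mul, conj_ofReal, hconj, real_smul,
      mul_pow, mul_pow, ← Complex.exp_nat_mul, ← Complex.exp_nat_mul]
    calc (r : ℂ) * ((r : ℂ) ^ n * exp (n * (θ * I)) * ((r : ℂ) ^ m * exp (m * -(θ * I))) * h r)
        = (r : ℂ) ^ (n + m + 1) * h r * (exp (n * (θ * I)) * exp (m * -(θ * I))) := by ring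
      _ = _ := by rw [← Complex.exp_add]; push_cast; ring_nf
  rw [setIntegral_congr_fun (measurableSet_Ioi.prod measurableSet_Ioo) hpolar,
    setIntegral_prod_mul (fun r : ℝ => (r : ℂ) ^ (n + m + 1) * h r)
      (fun θ : ℝ => exp (((n - m : ℤ) : ℂ) * (θ * I))), integral_exp_int_mul_I]
  by_cases hnm : n = m
  · subst hnm
    simp only [sub_self, if_true, mul_comm ((2 * π : ℝ) : ℂ)]
    congr 2 with r
    ring
  · rw [if_neg (by omega), if_neg hnm, mul_zero]

lemma image_sq_div_one_add_sq_Ioi :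
    (fun r : ℝ => r ^ 2 / (1 + r ^ 2)) '' Set.Ioi 0 = Set.Ioo 0 1 := by
  ext τ
  constructor
  · rintro ⟨r, hr, rfl⟩
    exact ⟨by have := hr.out; positivity, by rw [div_lt_one (by positivity)]; linarith⟩
  · rintro ⟨h0, h1⟩
    have hpos : 0 < τ / (1 - τ) := div_pos h0 (by linarith)
    refine ⟨√(τ / (1 - τ)), Real.sqrt_pos.2 hpos, ?_⟩
    have : (1 - τ) ≠ 0 := by linarith
    simp only [Real.sq_sqrt hpos.le]
    field_simp
    ring

lemma integral_Ioo_eq_integral_Ioi_sq_div_one_add_sq {E : Type*} [NormedAddCommGroup E]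
    [NormedSpace ℝ E] (G : ℝ → E) :
    ∫ τ in Set.Ioo (0 : ℝ) 1, G τ =
      ∫ r in Set.Ioi (0 : ℝ), (2 * r / (1 + r ^ 2) ^ 2) • G (r ^ 2 / (1 + r ^ 2)) := by
  have hderiv : ∀ r ∈ Set.Ioi (0 : ℝ), HasDerivWithinAt (fun r : ℝ => r ^ 2 / (1 + r ^ 2))
      (2 * r / (1 + r ^ 2) ^ 2) (Set.Ioi 0) r := by
    intro r _
    have h := (hasDerivAt_pow 2 r).div ((hasDerivAt_pow 2 r).const_add 1)
      (by positivity : (1 : ℝ) + r ^ 2 ≠ 0)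
    exact (h.congr_deriv (by field_simp; ring)).hasDerivWithinAt
  have hinj : Set.InjOn (fun r : ℝ => r ^ 2 / (1 + r ^ 2)) (Set.Ioi 0) := by
    intro r hr s hs hrs
    have hsq : r ^ 2 = s ^ 2 := by
      simp only at hrs
      field_simp at hrs
      linarith
    exact (pow_left_inj₀ hr.out.le hs.out.le two_ne_zero).1 hsq
  rw [← image_sq_div_one_add_sq_Ioi,
    integral_image_eq_integral_abs_deriv_smul measurableSet_Ioi hderiv hinj]
  refine setIntegral_congr_fun measurableSet_Ioi fun r hr => ?_
  rw [abs_of_pos (by have := hr.out; positivity)]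

lemma integral_Ioo_pow_mul_one_sub_pow (n m : ℕ) :
    ∫ τ in Set.Ioo (0 : ℝ) 1, τ ^ n * (1 - τ) ^ m = (n ! : ℝ) * m ! / (n + m + 1)! := by
  have hbeta : Complex.betaIntegral (n + 1) (m + 1) = (n ! : ℂ) * m ! / (n + m + 1)! := by
    have h := Complex.Gamma_mul_Gamma_eq_betaIntegral (s := n + 1) (t := m + 1)
      (by simp; positivity) (by simp; positivity)
    rw [show (n + 1 : ℂ) + (m + 1) = ((n + m + 1 : ℕ) : ℂ) + 1 by push_cast; ring,
      Complex.Gamma_nat_eq_factorial, Complex.Gamma_nat_eq_factorial,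
      Complex.Gamma_nat_eq_factorial] at h
    rw [h, mul_div_cancel_left₀ _ (by exact_mod_cast (n + m + 1).factorial_ne_zero)]
  have hint : Complex.betaIntegral (n + 1) (m + 1) =
      ((∫ τ in Set.Ioo (0 : ℝ) 1, τ ^ n * (1 - τ) ^ m : ℝ) : ℂ) := by
    rw [Complex.betaIntegral, intervalIntegral.integral_of_le zero_le_one,
      integral_Ioc_eq_integral_Ioo, ← integral_complex_ofReal]
    refine setIntegral_congr_fun measurableSet_Ioo fun τ _ => ?_
    simp only [add_sub_cancel_right, Complex.cpow_natCast]
    norm_cast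
  apply Complex.ofReal_injective
  rw [← hint, hbeta]
  simp

lemma integral_muN_monomial_mul_comp_tauS {N n : ℕ} (hn : n < N) (m : ℕ) (g : ℝ → ℂ) :
    ∫ z, z ^ n * conj z ^ m * g (tauS z) ∂muN N =
      if n = m then ∫ τ in Set.Ioo (0 : ℝ) 1, ((τ ^ n * (1 - τ) ^ (N - 1 - n) : ℝ) : ℂ) * g τ
      else 0 := by
  rw [integral_muN]
  convert integral_monomial_mul_radial n m
    (fun r => ((1 / (π * (1 + r ^ 2) ^ (N + 1)) : ℝ) : ℂ) * g (r ^ 2 / (1 + r ^ 2))) using 1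
  · congr with z
    rw [real_smul, tauS]
    ring
  split_ifs with hnm
  · subst hnm
    rw [integral_Ioo_eq_integral_Ioi_sq_div_one_add_sq, ← integral_const_mul]
    refine setIntegral_congr_fun measurableSet_Ioi fun r _ => ?_
    obtain ⟨k, rfl⟩ : ∃ k, N = n + k + 1 := ⟨N - n - 1, by omega⟩
    have hsub : 1 - r ^ 2 / (1 + r ^ 2) = 1 / (1 + r ^ 2) := by field_simp; ring
    have hcoeff : 2 * r / (1 + r ^ 2) ^ 2 * ((r ^ 2 / (1 + r ^ 2)) ^ n * (1 / (1 + r ^ 2)) ^ k) =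
        2 * π * (r ^ (2 * n + 1) * (1 / (π * (1 + r ^ 2) ^ (n + k + 1 + 1)))) := by
      rw [div_pow, div_pow, one_pow]
      field_simp
      ring
    rw [show n + k + 1 - 1 - n = k by omega, hsub, real_smul, ← mul_assoc, ← ofReal_mul, hcoeff]
    push_cast
    ring
  · rfl

def monomialNormSq (N n : ℕ) : ℝ := n ! * (N - 1 - n)! / N !

lemma monomialNormSq_pos (N n : ℕ) : 0 < monomialNormSq N n := by
  unfold monomialNormSq
  positivity

lemma integral_muN_monomial {N n : ℕ} (hn : n < N) (m : ℕ) :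
    ∫ z, z ^ n * conj z ^ m ∂muN N = if n = m then (monomialNormSq N n : ℂ) else 0 := by
  have h := integral_muN_monomial_mul_comp_tauS hn m (fun _ => 1)
  simp only [mul_one] at h
  rw [h, integral_complex_ofReal, integral_Ioo_pow_mul_one_sub_pow,
    show n + (N - 1 - n) + 1 = N by omega, monomialNormSq]

lemma natCast_mul_choose_mul_monomialNormSq {N n : ℕ} (hn : n < N) :
    (N : ℝ) * (N - 1).choose n * monomialNormSq N n = 1 := by
  obtain ⟨M, rfl⟩ : ∃ M, N = M + 1 := ⟨N - 1, by omega⟩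
  have h := Nat.choose_mul_factorial_mul_factorial (show n ≤ M by omega)
  rw [monomialNormSq, show M + 1 - 1 = M by omega, Nat.factorial_succ]
  field_simp
  exact_mod_cast (by rw [← h]; ring : (M + 1) * M.choose n * n ! * (M - n)! = (M + 1) * M !)

lemma phiN_apply (N n : ℕ) (z : ℂ) : phiN N n z = (√(monomialNormSq N n)⁻¹ : ℝ) * z ^ n := by
  rw [phiN, monomialNormSq, inv_div]

lemma sq_sqrt_inv_monomialNormSq_mul (N n : ℕ) :
    √(monomialNormSq N n)⁻¹ ^ 2 * monomialNormSq N n = 1 := by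
  rw [Real.sq_sqrt (inv_nonneg.2 (monomialNormSq_pos N n).le),
    inv_mul_cancel₀ (monomialNormSq_pos N n).ne']

lemma Polynomial.eval_eq_sum_range_of_degree_lt {R : Type*} [Semiring R] {p : Polynomial R}
    {N : ℕ} (hp : p.degree < N) (x : R) : p.eval x = ∑ k ∈ range N, p.coeff k * x ^ k := by
  rcases eq_or_ne p 0 with rfl | hp0
  · simp
  · exact Polynomial.eval_eq_sum_range' ((Polynomial.natDegree_lt_iff_degree_lt hp0).2 hp) x

lemma hermN_eval_phiN {N : ℕ} {f : Polynomial ℂ} (hf : f.degree < N) {n : ℕ} (hn : n < N) :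
    hermN N (fun u => f.eval u) (phiN N n) =
      f.coeff n * (√(monomialNormSq N n)⁻¹ * monomialNormSq N n : ℝ) := by
  have hexpand : (fun u => f.eval u * conj (phiN N n u)) = fun u =>
      ∑ k ∈ range N, f.coeff k * (√(monomialNormSq N n)⁻¹ : ℝ) * (u ^ k * conj u ^ n) := by
    ext u
    rw [phiN_apply, Polynomial.eval_eq_sum_range_of_degree_lt hf, Finset.sum_mul]
    refine Finset.sum_congr rfl fun k _ => ?_
    simp only [map_mul, map_pow, conj_ofReal]
    ring
  rw [hermN, hexpand, integral_finsetSum _ fun k hk =>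
    (integrable_muN_monomial (mem_range.1 hk) hn).const_mul _]
  rw [Finset.sum_congr rfl fun k hk => by
    rw [integral_const_mul, integral_muN_monomial (mem_range.1 hk)]]
  simp only [mul_ite, mul_zero, Finset.sum_ite_eq', mem_range, if_pos hn]
  push_cast
  ring

lemma eval_eq_sum_hermN_mul_phiN {N : ℕ} {f : Polynomial ℂ} (hf : f.degree < N) (w : ℂ) :
    f.eval w = ∑ n ∈ range N, hermN N (fun u => f.eval u) (phiN N n) * phiN N n w := by
  rw [Polynomial.eval_eq_sum_range_of_degree_lt hf]
  refine Finset.sum_congr rfl fun n hn => ?_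
  rw [hermN_eval_phiN hf (mem_range.1 hn), phiN_apply]
  have h := congrArg ((↑) : ℝ → ℂ) (sq_sqrt_inv_monomialNormSq_mul N n)
  push_cast at h ⊢
  linear_combination -(f.coeff n * w ^ n) * h

lemma norm_exp_I_mul_mul (x y : ℝ) : ‖exp (I * x * y)‖ = 1 := by
  rw [show I * x * y = ((x * y : ℝ) : ℂ) * I by push_cast; ring, norm_exp_ofReal_mul_I]

lemma continuous_tildeF {a : ℝ → ℂ} (ha : Integrable a) : Continuous (tildeF a) := by
  refine continuous_const.mul (continuous_of_dominated (bound := fun x => ‖a x‖)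
    (fun y => ((by fun_prop : Continuous fun x : ℝ => exp (I * x * y)).aestronglyMeasurable.mul
      ha.aestronglyMeasurable)) (fun y => ae_of_all _ fun x => ?_) ha.norm
    (ae_of_all _ fun x => by fun_prop))
  rw [norm_mul, norm_exp_I_mul_mul, one_mul]

lemma norm_tildeF_le (a : ℝ → ℂ) (y : ℝ) :
    ‖tildeF a y‖ ≤ (√(2 * π))⁻¹ * ∫ x, ‖a x‖ := by
  rw [tildeF, norm_mul, norm_real, Real.norm_of_nonneg (by positivity)]
  gcongr
  refine (norm_integral_le_integral_norm _).trans_eq ?_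
  simp_rw [norm_mul, norm_exp_I_mul_mul, one_mul]

lemma rhoN_apply_eq_sum (N : ℕ) (z₀ w : ℂ) :
    rhoN N z₀ w = ∑ k ∈ range N, N * (N - 1).choose k * (conj z₀ * w) ^ k := by
  cases N with
  | zero => simp [rhoN]
  | succ M =>
    rw [rhoN, Nat.add_sub_cancel, add_comm 1, add_pow, Finset.mul_sum]
    refine Finset.sum_congr rfl fun k _ => ?_
    ring

lemma psiA_apply_eq_sum {ℏ : ℝ} (hℏ : ℏ ≠ 0) {a : ℝ → ℂ} (ha : Integrable a) (N : ℕ)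
    (z w : ℂ) :
    psiA N ℏ a z w = ∑ k ∈ range N,
      N * (N - 1).choose k * tildeF a ((tauS z - k * ℏ) / ℏ) * conj z ^ k * w ^ k := by
  have hexp (t : ℝ) (k : ℕ) : exp (I * tauS z * t / ℏ) * conj (exp (I * t)) ^ k =
      exp (I * t * ((tauS z - k * ℏ) / ℏ : ℝ)) := by
    rw [← exp_conj, map_mul, conj_I, conj_ofReal, ← Complex.exp_nat_mul, ← Complex.exp_add]
    have : (ℏ : ℂ) ≠ 0 := by exact_mod_cast hℏ
    congr 1
    push_cast
    field_simp
    ring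
  have hexpand : (fun t : ℝ => a t * exp (I * tauS z * t / ℏ) *
      rhoN N (exp (I * t) * z) w / (√(2 * π) : ℂ)) = fun t : ℝ => ∑ k ∈ range N,
        N * (N - 1).choose k * conj z ^ k * w ^ k * ((√(2 * π) : ℂ)⁻¹ *
          (exp (I * t * ((tauS z - k * ℏ) / ℏ : ℝ)) * a t)) := by
    ext t
    rw [rhoN_apply_eq_sum, Finset.mul_sum, Finset.sum_div]
    refine Finset.sum_congr rfl fun k _ => ?_
    rw [← hexp, map_mul, mul_pow, mul_pow]
    ring
  rw [psiA, hexpand, integral_finsetSum _ fun k _ => ?_]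
  · refine Finset.sum_congr rfl fun k _ => ?_
    rw [integral_const_mul, integral_const_mul, tildeF]
    push_cast
    ring
  · refine (ha.bdd_mul (c := 1) (by fun_prop) (ae_of_all _ fun t => ?_)).const_mul _ |>.const_mul _
    rw [norm_exp_I_mul_mul]

lemma CNn_eq_integral_Ioo {N n : ℕ} (hn : n < N) (ℏ : ℝ) (a : ℝ → ℂ) :
    CNn N ℏ a n = N * (N - 1).choose n * ∫ τ in Set.Ioo (0 : ℝ) 1,
      τ ^ n * (1 - τ) ^ (N - 1 - n) * ‖tildeF a ((τ - n * ℏ) / ℏ)‖ ^ 2 := by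
  rw [CNn, intervalIntegral.integral_of_le zero_le_one, integral_Ioc_eq_integral_Ioo]
  congr 1
  refine setIntegral_congr_fun measurableSet_Ioo fun τ hτ => ?_
  have : 1 - τ ≠ 0 := by linarith [hτ.2]
  obtain ⟨k, rfl⟩ : ∃ k, N = n + k + 1 := ⟨N - n - 1, by omega⟩
  rw [show n + k + 1 - 1 = n + k by omega, show n + k - n = k by omega, div_pow, pow_add]
  field_simp

lemma hermN_phiN_psiA {ℏ : ℝ} (hℏ : ℏ ≠ 0) {a : ℝ → ℂ} (ha : Integrable a) {N n : ℕ}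
    (hn : n < N) (z : ℂ) :
    hermN N (phiN N n) (psiA N ℏ a z) =
      (√(monomialNormSq N n)⁻¹ : ℝ) * conj (tildeF a ((tauS z - n * ℏ) / ℏ)) * z ^ n := by
  have hexpand : (fun u => phiN N n u * conj (psiA N ℏ a z u)) = fun u => ∑ m ∈ range N,
      (√(monomialNormSq N n)⁻¹ : ℝ) * N * (N - 1).choose m *
        conj (tildeF a ((tauS z - m * ℏ) / ℏ)) * z ^ m * (u ^ n * conj u ^ m) := by
    ext u
    rw [phiN_apply, psiA_apply_eq_sum hℏ ha, map_sum, Finset.mul_sum]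
    refine Finset.sum_congr rfl fun m _ => ?_
    simp only [map_mul, map_pow, map_natCast, conj_conj]
    ring
  rw [hermN, hexpand, integral_finsetSum _ fun m hm =>
    (integrable_muN_monomial hn (mem_range.1 hm)).const_mul _]
  simp only [integral_const_mul, integral_muN_monomial hn, mul_ite, mul_zero, Finset.sum_ite_eq,
    mem_range, if_pos hn]
  have h := congrArg ((↑) : ℝ → ℂ) (natCast_mul_choose_mul_monomialNormSq hn)
  push_cast at h ⊢
  linear_combination ((√(monomialNormSq N n)⁻¹ : ℝ) * conj (tildeF a ((tauS z - n * ℏ) / ℏ)) *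
    z ^ n) * h

lemma hermN_phiN_psiA_mul_psiA_eq_sum {ℏ : ℝ} (hℏ : ℏ ≠ 0) {a : ℝ → ℂ} (ha : Integrable a)
    {N n : ℕ} (hn : n < N) (w z : ℂ) :
    hermN N (phiN N n) (psiA N ℏ a z) * psiA N ℏ a z w = ∑ m ∈ range N,
      (√(monomialNormSq N n)⁻¹ : ℝ) * N * (N - 1).choose m * w ^ m *
        (z ^ n * conj z ^ m * (conj (tildeF a ((tauS z - n * ℏ) / ℏ)) *
          tildeF a ((tauS z - m * ℏ) / ℏ))) := by
  rw [hermN_phiN_psiA hℏ ha hn, psiA_apply_eq_sum hℏ ha, Finset.mul_sum]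
  refine Finset.sum_congr rfl fun m _ => ?_
  ring

lemma integrable_muN_monomial_mul_conj_tildeF_mul_tildeF {ℏ : ℝ} {a : ℝ → ℂ}
    (ha : Integrable a) {N n m : ℕ} (hn : n < N) (hm : m < N) :
    Integrable (fun z => z ^ n * conj z ^ m *
      (conj (tildeF a ((tauS z - n * ℏ) / ℏ)) * tildeF a ((tauS z - m * ℏ) / ℏ))) (muN N) := by
  have hcont (j : ℕ) : Continuous fun τ : ℝ => tildeF a ((τ - j * ℏ) / ℏ) :=
    (continuous_tildeF ha).comp (by fun_prop)
  set M := (√(2 * π))⁻¹ * ∫ x, ‖a x‖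
  refine integrable_muN_monomial_mul_comp_tauS (C := M * M)
    (g := fun τ => conj (tildeF a ((τ - n * ℏ) / ℏ)) * tildeF a ((τ - m * ℏ) / ℏ))
    hn hm ((continuous_conj.comp (hcont n)).mul (hcont m)) fun τ => ?_
  rw [norm_mul, Complex.norm_conj]
  exact mul_le_mul (norm_tildeF_le a _) (norm_tildeF_le a _) (norm_nonneg _)
    ((norm_nonneg _).trans (norm_tildeF_le a 0))

lemma integrable_hermN_phiN_psiA_mul_psiA {ℏ : ℝ} (hℏ : ℏ ≠ 0) {a : ℝ → ℂ} (ha : Integrable a)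
    {N n : ℕ} (hn : n < N) (w : ℂ) :
    Integrable (fun z => hermN N (phiN N n) (psiA N ℏ a z) * psiA N ℏ a z w) (muN N) := by
  simp_rw [hermN_phiN_psiA_mul_psiA_eq_sum hℏ ha hn]
  exact integrable_finsetSum _ fun m hm =>
    (integrable_muN_monomial_mul_conj_tildeF_mul_tildeF ha hn (mem_range.1 hm)).const_mul _

lemma integral_hermN_phiN_psiA_mul_psiA {ℏ : ℝ} (hℏ : ℏ ≠ 0) {a : ℝ → ℂ} (ha : Integrable a)
    {N n : ℕ} (hn : n < N) (w : ℂ) :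
    ∫ z, hermN N (phiN N n) (psiA N ℏ a z) * psiA N ℏ a z w ∂muN N =
      CNn N ℏ a n * phiN N n w := by
  simp_rw [hermN_phiN_psiA_mul_psiA_eq_sum hℏ ha hn]
  rw [integral_finsetSum _ fun m hm =>
    (integrable_muN_monomial_mul_conj_tildeF_mul_tildeF ha hn (mem_range.1 hm)).const_mul _]
  rw [Finset.sum_congr rfl fun m _ => by
    rw [integral_const_mul, integral_muN_monomial_mul_comp_tauS hn m
      (fun τ => conj (tildeF a ((τ - n * ℏ) / ℏ)) * tildeF a ((τ - m * ℏ) / ℏ))]]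
  simp only [mul_ite, mul_zero, Finset.sum_ite_eq, mem_range, if_pos hn, conj_mul', ← ofReal_pow,
    ← ofReal_mul, integral_complex_ofReal]
  rw [CNn_eq_integral_Ioo hn, phiN_apply]
  push_cast
  ring

theorem stmt6_general (N : ℕ) (ℏ : ℝ) (hℏ : 0 < ℏ) (a : SchwartzMap ℝ ℂ)
    (hC : ∀ n : ℕ, n ≤ N - 1 → 0 < CNn N ℏ (⇑a) n)
    (f : Polynomial ℂ) (hf : f.degree < (N : ℕ)) (w : ℂ) :
    (∫ z, hermA N ℏ (⇑a) (fun u => f.eval u) (psiA N ℏ (⇑a) z) * psiA N ℏ (⇑a) z w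
        ∂(muN N)) = f.eval w := by
  have hint (n : ℕ) (hn : n ∈ range N) := integrable_hermN_phiN_psiA_mul_psiA hℏ.ne' a.integrable
    (mem_range.1 hn) w
  simp_rw [hermA, Finset.sum_mul, mul_assoc]
  rw [integral_finsetSum _ fun n hn => ((hint n hn).const_mul _).const_mul _,
    eval_eq_sum_hermN_mul_phiN hf]
  refine Finset.sum_congr rfl fun n hn => ?_
  have hCn : (CNn N ℏ a n : ℂ) ≠ 0 :=
    ofReal_ne_zero.2 (hC n (by have := mem_range.1 hn; omega)).ne'
  rw [integral_const_mul, integral_const_mul,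
    integral_hermN_phiN_psiA_mul_psiA hℏ.ne' a.integrable (mem_range.1 hn)]
  field_simp

/-- resolution of the identity
`∫_ℂ ⟨f, ψ^a_z⟩_a · ψ^a_z dμ_N(z) = f` for every `f ∈ H_N`. -/
theorem stmt6 (N : ℕ) (hN : 1 ≤ N) (ℏ : ℝ) (hℏ : 0 < ℏ) (a : SchwartzMap ℝ ℂ)
    (hC : ∀ n : ℕ, n ≤ N - 1 → 0 < CNn N ℏ (⇑a) n)
    (f : Polynomial ℂ) (hf : f.degree < (N : ℕ)) (w : ℂ) :
    (∫ z, hermA N ℏ (⇑a) (fun u => f.eval u) (psiA N ℏ (⇑a) z) * psiA N ℏ (⇑a) z w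
        ∂(muN N)) = f.eval w :=
  stmt6_general N ℏ hℏ a hC f hf w
end
end

section
/- Let γ_k : ℝ → ℂ be arbitrary functions for −(N−1) ≤ k ≤ N−1, and let 𝓝_Γ be the band operator on H_N defined by 𝓝_Γψ^N_n := Σ_{k : 0 ≤ n+k ≤ N−1} γ_k(nℏ)·ψ^N_{n+k}. Then for every z ∈ ℂ∖{0}: 𝓝_Γψ^a_z = Σ_{n=0}^{N−1} c_n(z)·conj(φ_n(z))·φ_n, where c_n(z) = Σ_{k=n−N+1}^{n} conj(z)^(−k)·m_k(n)·√(C^N_n/C^N_{n−k})·γ_k((n−k)ℏ)·ã(τ(z)/ℏ − (n−k)), with m_k(n) := μ_k(n) for k ≥ 1, m_0(n) := 1, and m_k(n) := ν_{−k}(n) for k ≤ −1. (Thus 𝓝_Γψ^a_z is again of the form ψ^{b_z}_z: the content of Proposition 3.8.) -/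
open MeasureTheory Complex Real

noncomputable section

/-- The normalized vectors `ψ^N_n = √(C^N_n)·φ_n`. -/
def psiNn (N : ℕ) (ℏ : ℝ) (a : ℝ → ℂ) (n : ℕ) : ℂ → ℂ :=
  fun z => (Real.sqrt (CNn N ℏ a n) : ℂ) * phiN N n z

/-- `μ_k(n) = √(binom(n,k)/binom(N−1−n+k,k))` for `k ≤ n ≤ N−1`, and `0` otherwise. -/
def mukF (N k n : ℕ) : ℝ :=
  if k ≤ n ∧ n ≤ N - 1 then Real.sqrt ((n.choose k : ℝ) / ((N - 1 - n + k).choose k : ℝ))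
  else 0

/-- `ν_k(n) = √(binom(N−1−n,k)/binom(n+k,k))` for `0 ≤ n ≤ N−1−k`, and `0` otherwise. -/
def nukF (N k n : ℕ) : ℝ :=
  if n ≤ N - 1 - k then Real.sqrt (((N - 1 - n).choose k : ℝ) / ((n + k).choose k : ℝ))
  else 0

/-- `m_k(n)`: equal to `μ_k(n)` for `k ≥ 1`, to `1` for `k = 0`, and to `ν_{−k}(n)` for
`k ≤ −1`. -/
def mkF (N : ℕ) (k : ℤ) (n : ℕ) : ℝ :=
  if 0 < k then mukF N k.toNat n else if k = 0 then 1 else nukF N (-k).toNat n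

/-!
Expanding `ρ_{e^{it}z}` binomially, the `t`-integral defining `ψ^a_z` turns each monomial into a
value of `ã`: `ψ^a_z(w) = Σ_n N·binom(N−1,n)·(z̄w)ⁿ·ã(τ(z)/ℏ − n)`, so `ψ^a_z` has explicit
coordinates in the basis `ψ^N_n`. Applying the band operator and re-indexing by `m = n + k`, the
ratio of the normalizations of `φ_n` and `φ_m` is exactly `m_k(m)²`, which produces `c_m(z)`.
-/

open Finset

def phiWeight (N n : ℕ) : ℝ := (N.factorial : ℝ) / (n.factorial * (N - 1 - n).factorial)

lemma phiWeight_pos (N n : ℕ) : 0 < phiWeight N n := by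
  unfold phiWeight; positivity

lemma phiN_eq (N n : ℕ) (z : ℂ) : phiN N n z = (Real.sqrt (phiWeight N n) : ℂ) * z ^ n := rfl

lemma natCast_mul_choose_eq_phiWeight {N n : ℕ} (hn : n < N) :
    (N : ℝ) * ((N - 1).choose n : ℝ) = phiWeight N n := by
  rw [phiWeight, Nat.cast_choose ℝ (by omega : n ≤ N - 1),
    ← Nat.mul_factorial_pred (by omega : N ≠ 0)]
  push_cast
  ring

lemma choose_div_choose_eq_phiWeight_div {N n m j : ℕ} (hm : m < N) (hnm : n + j = m) :
    (m.choose j : ℝ) / ((N - 1 - n).choose j : ℝ) = phiWeight N n / phiWeight N m := by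
  rw [Nat.cast_choose ℝ (by omega : j ≤ m), Nat.cast_choose ℝ (by omega : j ≤ N - 1 - n),
    show m - j = n by omega, show N - 1 - n - j = N - 1 - m by omega, phiWeight, phiWeight]
  field_simp

lemma mkF_eq_sqrt_phiWeight_div {N n m : ℕ} {k : ℤ} (hn : n < N) (hm : m < N)
    (hnm : (n : ℤ) + k = m) :
    mkF N k m = Real.sqrt (phiWeight N n / phiWeight N m) := by
  rcases lt_trichotomy k 0 with hk | rfl | hk
  · rw [mkF, if_neg (by omega), if_neg (by omega), nukF, if_pos (by omega),
      show m + (-k).toNat = n by omega, ← inv_div,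
      choose_div_choose_eq_phiWeight_div hn (by omega : m + (-k).toNat = n), inv_div]
  · obtain rfl : m = n := by omega
    simp [mkF, div_self (phiWeight_pos N m).ne']
  · rw [mkF, if_pos hk, mukF, if_pos ⟨by omega, by omega⟩,
      show N - 1 - m + k.toNat = N - 1 - n by omega,
      choose_div_choose_eq_phiWeight_div hm (by omega : n + k.toNat = m)]

lemma sum_range_sum_band {M : Type*} [AddCommMonoid M] (N : ℕ) (f : ℕ → ℕ → ℤ → M) :
    ∑ n ∈ range N, ∑ k ∈ (Icc (-(N : ℤ) + 1) ((N : ℤ) - 1)).filter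
        (fun k => 0 ≤ (n : ℤ) + k ∧ (n : ℤ) + k ≤ (N : ℤ) - 1), f n ((n : ℤ) + k).toNat k
      = ∑ m ∈ range N, ∑ k ∈ Icc ((m : ℤ) - N + 1) (m : ℤ), f ((m : ℤ) - k).toNat m k := by
  rw [sum_sigma', sum_sigma']
  refine sum_nbij' (fun p => ⟨((p.1 : ℤ) + p.2).toNat, p.2⟩)
    (fun p => ⟨((p.1 : ℤ) - p.2).toNat, p.2⟩) ?_ ?_ ?_ ?_ ?_ <;>
  rintro ⟨n, k⟩ hp <;>
  simp only [mem_sigma, mem_range, mem_filter, mem_Icc, Sigma.mk.inj_iff, heq_eq_eq,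
    and_true] at hp ⊢
  · omega
  · omega
  · omega
  · omega
  · congr 1; omega

lemma rhoN_eq_sum (N : ℕ) (z₀ w : ℂ) :
    rhoN N z₀ w
      = ∑ n ∈ range N, (N : ℂ) * ((N - 1).choose n : ℂ) * (starRingEnd ℂ z₀ * w) ^ n := by
  cases N with
  | zero => simp [rhoN]
  | succ N =>
    rw [rhoN, Nat.add_sub_cancel, add_comm (1 : ℂ), add_pow, mul_sum]
    refine sum_congr rfl fun n _ => ?_
    simp only [one_pow, mul_one]
    ring

lemma sqrt_two_pi_ne_zero : (Real.sqrt (2 * Real.pi) : ℂ) ≠ 0 := by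
  exact_mod_cast (Real.sqrt_pos.2 (by positivity)).ne'

lemma integral_exp_mul_eq_tildeF (a : ℝ → ℂ) (y : ℝ) :
    ∫ x : ℝ, Complex.exp (Complex.I * x * y) * a x
      = (Real.sqrt (2 * Real.pi) : ℂ) * tildeF a y := by
  rw [tildeF, Complex.ofReal_inv, mul_inv_cancel_left₀ sqrt_two_pi_ne_zero]

lemma integrable_exp_mul {a : ℝ → ℂ} (ha : Integrable a) (y : ℝ) :
    Integrable fun x : ℝ => Complex.exp (Complex.I * x * y) * a x := by
  refine ha.bdd_mul (c := 1) (by fun_prop) (Filter.Eventually.of_forall fun x => ?_)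
  rw [Complex.norm_exp]
  simp

lemma psiA_eq_sum {a : ℝ → ℂ} (ha : Integrable a) (N : ℕ) (ℏ : ℝ) (z w : ℂ) :
    psiA N ℏ a z w = ∑ n ∈ range N, (N : ℂ) * ((N - 1).choose n : ℂ) * (starRingEnd ℂ z * w) ^ n
      * tildeF a (tauS z / ℏ - n) := by
  have hterm : ∀ t : ℝ, a t * Complex.exp (Complex.I * tauS z * t / ℏ)
        * rhoN N (Complex.exp (Complex.I * t) * z) w / (Real.sqrt (2 * Real.pi) : ℂ)
      = ∑ n ∈ range N, (N : ℂ) * ((N - 1).choose n : ℂ) * (starRingEnd ℂ z * w) ^ n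
          / (Real.sqrt (2 * Real.pi) : ℂ)
        * (Complex.exp (Complex.I * t * ((tauS z / ℏ - n : ℝ) : ℂ)) * a t) := by
    intro t
    rw [rhoN_eq_sum, mul_sum, sum_div]
    refine sum_congr rfl fun n _ => ?_
    have hexp : Complex.exp (Complex.I * tauS z * t / ℏ)
          * starRingEnd ℂ (Complex.exp (Complex.I * t)) ^ n
        = Complex.exp (Complex.I * t * ((tauS z / ℏ - n : ℝ) : ℂ)) := by
      rw [← Complex.exp_conj, ← Complex.exp_nat_mul, ← Complex.exp_add]
      congr 1
      simp only [map_mul, Complex.conj_I, Complex.conj_ofReal]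
      push_cast
      ring
    rw [map_mul, mul_pow, ← hexp]
    ring
  simp only [psiA, hterm]
  rw [integral_finsetSum _ fun n _ => (integrable_exp_mul ha _).const_mul _]
  simp only [integral_const_mul, integral_exp_mul_eq_tildeF]
  refine sum_congr rfl fun n _ => ?_
  field_simp [sqrt_two_pi_ne_zero]

def psiACoeff (N : ℕ) (ℏ : ℝ) (a : ℝ → ℂ) (z : ℂ) (n : ℕ) : ℂ :=
  starRingEnd ℂ z ^ n * (Real.sqrt (phiWeight N n) / Real.sqrt (CNn N ℏ a n) : ℝ)
    * tildeF a (tauS z / ℏ - n)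

lemma psiA_eq_sum_smul_psiNn {a : ℝ → ℂ} (ha : Integrable a) {N : ℕ} (ℏ : ℝ)
    (hC : ∀ n < N, 0 < CNn N ℏ a n) (z : ℂ) :
    psiA N ℏ a z = ∑ n ∈ range N, psiACoeff N ℏ a z n • psiNn N ℏ a n := by
  funext w
  rw [psiA_eq_sum ha, Finset.sum_apply]
  refine sum_congr rfl fun n hn => ?_
  have hCn : (Real.sqrt (CNn N ℏ a n) : ℂ) ≠ 0 := by
    exact_mod_cast (Real.sqrt_pos.2 (hC n (mem_range.1 hn))).ne'
  have hw : (N : ℂ) * ((N - 1).choose n : ℂ) = (Real.sqrt (phiWeight N n) : ℂ) ^ 2 := by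
    rw [← Complex.ofReal_pow, Real.sq_sqrt (phiWeight_pos N n).le,
      ← natCast_mul_choose_eq_phiWeight (mem_range.1 hn)]
    push_cast; rfl
  rw [hw, Pi.smul_apply, smul_eq_mul, psiNn, phiN_eq, psiACoeff]
  push_cast
  field_simp
  ring

lemma psiACoeff_mul_psiNn {a : ℝ → ℂ} {N n m : ℕ} {k : ℤ} (ℏ : ℝ) (hn : n < N) (hm : m < N)
    (hnm : (n : ℤ) + k = m) (hCn : 0 < CNn N ℏ a n) {z : ℂ} (hz : z ≠ 0) (w : ℂ) :
    psiACoeff N ℏ a z n * psiNn N ℏ a m w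
      = starRingEnd ℂ z ^ (-k) * (mkF N k m : ℂ) * (Real.sqrt (CNn N ℏ a m / CNn N ℏ a n) : ℂ)
        * tildeF a (tauS z / ℏ - n) * starRingEnd ℂ (phiN N m z) * phiN N m w := by
  have hzpow : starRingEnd ℂ z ^ (-k) = starRingEnd ℂ z ^ n / starRingEnd ℂ z ^ m := by
    rw [← zpow_natCast, ← zpow_natCast, ← zpow_sub₀ (by simpa using hz)]
    congr 1; omega
  have hCn' : Real.sqrt (CNn N ℏ a n) ≠ 0 := (Real.sqrt_pos.2 hCn).ne'
  have hwm : Real.sqrt (phiWeight N m) ≠ 0 := (Real.sqrt_pos.2 (phiWeight_pos N m)).ne'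
  have hzm : starRingEnd ℂ z ^ m ≠ 0 := pow_ne_zero _ (by simpa using hz)
  rw [hzpow, mkF_eq_sqrt_phiWeight_div hn hm hnm, Real.sqrt_div' _ hCn.le,
    Real.sqrt_div' _ (phiWeight_pos N m).le, psiACoeff, psiNn, phiN_eq, phiN_eq]
  simp only [map_mul, map_pow, Complex.conj_ofReal]
  push_cast
  field_simp

theorem stmt10_general (N : ℕ) (ℏ : ℝ) (a : SchwartzMap ℝ ℂ)
    (hC : ∀ n : ℕ, n ≤ N - 1 → 0 < CNn N ℏ (⇑a) n)
    (γ : ℤ → ℝ → ℂ)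
    (T : (ℂ → ℂ) →ₗ[ℂ] (ℂ → ℂ))
    (hT : ∀ n : ℕ, n ≤ N - 1 →
      T (psiNn N ℏ (⇑a) n)
        = ∑ k ∈ (Finset.Icc (-(N : ℤ) + 1) ((N : ℤ) - 1)).filter
            (fun k => 0 ≤ (n : ℤ) + k ∧ (n : ℤ) + k ≤ (N : ℤ) - 1),
            γ k ((n : ℝ) * ℏ) • psiNn N ℏ (⇑a) ((n : ℤ) + k).toNat)
    (z : ℂ) (hz : z ≠ 0) :
    T (psiA N ℏ (⇑a) z) = fun w => ∑ n ∈ Finset.range N,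
      (∑ k ∈ Finset.Icc ((n : ℤ) - N + 1) (n : ℤ),
        ((starRingEnd ℂ) z) ^ (-k)
          * ((mkF N k n : ℝ) : ℂ)
          * (Real.sqrt (CNn N ℏ (⇑a) n / CNn N ℏ (⇑a) ((n : ℤ) - k).toNat) : ℂ)
          * γ k ((((n : ℤ) - k : ℤ) : ℝ) * ℏ)
          * tildeF (⇑a) (tauS z / ℏ - (((n : ℤ) - k : ℤ) : ℝ)))
      * (starRingEnd ℂ) (phiN N n z) * phiN N n w := by
  have hC' : ∀ n < N, 0 < CNn N ℏ a n := fun n hn => hC n (by omega)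
  have hTpsiA : T (psiA N ℏ a z)
      = ∑ n ∈ range N, ∑ k ∈ (Icc (-(N : ℤ) + 1) ((N : ℤ) - 1)).filter
        (fun k => 0 ≤ (n : ℤ) + k ∧ (n : ℤ) + k ≤ (N : ℤ) - 1),
        (psiACoeff N ℏ a z n * γ k ((n : ℝ) * ℏ)) • psiNn N ℏ a ((n : ℤ) + k).toNat := by
    rw [psiA_eq_sum_smul_psiNn a.integrable ℏ hC' z, map_sum]
    refine sum_congr rfl fun n hn => ?_
    rw [map_smul, hT n (by rw [mem_range] at hn; omega), smul_sum]
    simp only [smul_smul]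
  rw [hTpsiA, sum_range_sum_band N fun n m k =>
    (psiACoeff N ℏ a z n * γ k ((n : ℝ) * ℏ)) • psiNn N ℏ a m]
  funext w
  simp only [Finset.sum_apply, Pi.smul_apply, smul_eq_mul, sum_mul]
  refine sum_congr rfl fun m hm => sum_congr rfl fun k hk => ?_
  rw [mem_range] at hm
  rw [mem_Icc] at hk
  obtain ⟨n, hn⟩ : ∃ n : ℕ, (n : ℤ) = m - k := ⟨((m : ℤ) - k).toNat, by omega⟩
  rw [← hn, Int.toNat_natCast, Int.cast_natCast, mul_right_comm,
    psiACoeff_mul_psiNn (k := k) ℏ (by omega) hm (by omega) (hC' n (by omega)) hz]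
  ring

/-- Proposition 3.8: for the band operator
`𝓝_Γ ψ^N_n = Σ_{k : 0 ≤ n+k ≤ N−1} γ_k(nℏ)·ψ^N_{n+k}`, one has, for `z ≠ 0`,
`𝓝_Γ ψ^a_z = Σ_{n=0}^{N−1} c_n(z)·conj(φ_n(z))·φ_n` with
`c_n(z) = Σ_{k=n−N+1}^{n} conj(z)^{−k}·m_k(n)·√(C^N_n/C^N_{n−k})·γ_k((n−k)ℏ)·
           ã(τ(z)/ℏ−(n−k))`. -/
theorem stmt10 (N : ℕ) (hN : 1 ≤ N) (ℏ : ℝ) (hℏ : 0 < ℏ) (a : SchwartzMap ℝ ℂ)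
    (hC : ∀ n : ℕ, n ≤ N - 1 → 0 < CNn N ℏ (⇑a) n)
    (γ : ℤ → ℝ → ℂ)
    (T : (ℂ → ℂ) →ₗ[ℂ] (ℂ → ℂ))
    (hT : ∀ n : ℕ, n ≤ N - 1 →
      T (psiNn N ℏ (⇑a) n)
        = ∑ k ∈ (Finset.Icc (-(N : ℤ) + 1) ((N : ℤ) - 1)).filter
            (fun k => 0 ≤ (n : ℤ) + k ∧ (n : ℤ) + k ≤ (N : ℤ) - 1),
            γ k ((n : ℝ) * ℏ) • psiNn N ℏ (⇑a) ((n : ℤ) + k).toNat)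
    (z : ℂ) (hz : z ≠ 0) :
    T (psiA N ℏ (⇑a) z) = fun w => ∑ n ∈ Finset.range N,
      (∑ k ∈ Finset.Icc ((n : ℤ) - N + 1) (n : ℤ),
        ((starRingEnd ℂ) z) ^ (-k)
          * ((mkF N k n : ℝ) : ℂ)
          * (Real.sqrt (CNn N ℏ (⇑a) n / CNn N ℏ (⇑a) ((n : ℤ) - k).toNat) : ℂ)
          * γ k ((((n : ℤ) - k : ℤ) : ℝ) * ℏ)
          * tildeF (⇑a) (tauS z / ℏ - (((n : ℤ) - k : ℤ) : ℝ)))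
      * (starRingEnd ℂ) (phiN N n z) * phiN N n w :=
  stmt10_general N ℏ a hC γ T hT z hz
end
end
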